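/- arXiv:1612.08237 — 2 statements merged into one kernel-verified Lean document; each statement's English description precedes it below -/
import Mathlib

section
/- Let Ω ⊆ ℝ^n be a nonempty bounded open set, s ∈ (0,1), and let E ⊆ ℝ^{n+1} be measurable. Suppose that for some k ∈ ℕ one has {(x,t) ∈ ℝ^{n+1} : t ≤ −k} ⊆ E ⊆ {(x,t) ∈ ℝ^{n+1} : t ≤ k} (up to null sets). Then the nonlocal part of the s-perimeter in the infinite cylinder is infinite: P_s^{NL}(E, Ω^∞) = ∞. -/
open MeasureTheory Set Filter Topology Metric Bornology
open scoped ENNReal NNReal symmDiff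

noncomputable def Ls (n : ℕ) (s : ℝ) (A B : Set (EuclideanSpace ℝ (Fin n))) : ℝ≥0∞ :=
  ∫⁻ x in A, ∫⁻ y in B, ENNReal.ofReal (dist x y ^ (-((n : ℝ) + s)))

/-- Projection of a point of `ℝ^{n+1}` onto its first `n` coordinates. -/
def projT {n : ℕ} (X : EuclideanSpace ℝ (Fin (n + 1))) : EuclideanSpace ℝ (Fin n) :=
  WithLp.toLp 2 (fun i => X (Fin.castSucc i))

/-- The last ("vertical") coordinate of a point of `ℝ^{n+1}`. -/
def lastCoord {n : ℕ} (X : EuclideanSpace ℝ (Fin (n + 1))) : ℝ := X (Fin.last n)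

/-- The generalized cylinder `Ω × I ⊆ ℝ^{n+1}`. -/
def cylinder {n : ℕ} (Ω : Set (EuclideanSpace ℝ (Fin n))) (I : Set ℝ) :
    Set (EuclideanSpace ℝ (Fin (n + 1))) :=
  {X | projT X ∈ Ω ∧ lastCoord X ∈ I}

/-- The nonlocal part of the fractional `s`-perimeter. -/
noncomputable def PsNL (n : ℕ) (s : ℝ) (E Ω : Set (EuclideanSpace ℝ (Fin n))) : ℝ≥0∞ :=
  Ls n s (E ∩ Ω) (Eᶜ \ Ω) + Ls n s (E \ Ω) (Eᶜ ∩ Ω)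

/-!
Up to null sets, `E ∩ Ω^∞` contains `Ω × (-∞, a]` and `Eᶜ \ Ω^∞` contains `Ωᶜ × (b, ∞)` for suitable
heights `a`, `b`, so it suffices that these two sets interact infinitely. The first contains a
column of `m` disjoint balls of a fixed radius (volume `≍ m`), the second a ball of radius `m`
(volume `≍ mⁿ⁺¹`), all at mutual distance `O(m)`. The interaction is therefore
`≳ m · mⁿ⁺¹ · m^{-(n+1+s)} = m^{1-s}`, which is unbounded because `s < 1`.
-/

namespace EuclideanSpace

def snoc {n : ℕ} (x : EuclideanSpace ℝ (Fin n)) (t : ℝ) : EuclideanSpace ℝ (Fin (n + 1)) :=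
  WithLp.toLp 2 (Fin.snoc (α := fun _ => ℝ) x.ofLp t)

end EuclideanSpace

open EuclideanSpace

section Coordinates

variable {n : ℕ}

lemma snoc_projT_lastCoord (X : EuclideanSpace ℝ (Fin (n + 1))) :
    snoc (projT X) (lastCoord X) = X := by
  ext i; refine Fin.lastCases ?_ (fun j => ?_) i <;> simp [snoc, projT, lastCoord]

lemma dist_snoc_snoc (x y : EuclideanSpace ℝ (Fin n)) (t u : ℝ) :
    dist (snoc x t) (snoc y u) = √(dist x y ^ 2 + dist t u ^ 2) := by
  rw [EuclideanSpace.dist_eq, Fin.sum_univ_castSucc, EuclideanSpace.dist_eq,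
    Real.sq_sqrt (by positivity)]
  simp [snoc, Real.dist_eq]

lemma dist_base_le_dist_snoc (x y : EuclideanSpace ℝ (Fin n)) (t u : ℝ) :
    dist x y ≤ dist (snoc x t) (snoc y u) := by
  rw [dist_snoc_snoc]
  exact Real.le_sqrt_of_sq_le (le_add_of_nonneg_right (sq_nonneg _))

lemma dist_height_le_dist_snoc (x y : EuclideanSpace ℝ (Fin n)) (t u : ℝ) :
    dist t u ≤ dist (snoc x t) (snoc y u) := by
  rw [dist_snoc_snoc]
  exact Real.le_sqrt_of_sq_le (le_add_of_nonneg_left (sq_nonneg _))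

lemma dist_snoc_snoc_le (x y : EuclideanSpace ℝ (Fin n)) (t u : ℝ) :
    dist (snoc x t) (snoc y u) ≤ dist x y + dist t u := by
  rw [dist_snoc_snoc]
  refine (Real.sqrt_le_left (by positivity)).2 ?_
  nlinarith [mul_nonneg (dist_nonneg (x := x) (y := y)) (dist_nonneg (x := t) (y := u))]

lemma dist_snoc_snoc_left (x : EuclideanSpace ℝ (Fin n)) (t u : ℝ) :
    dist (snoc x t) (snoc x u) = dist t u := by
  rw [dist_snoc_snoc, dist_self, sq, zero_mul, zero_add, Real.sqrt_sq dist_nonneg]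

lemma ball_snoc_subset_cylinder (x : EuclideanSpace ℝ (Fin n)) (t ρ : ℝ) :
    ball (snoc x t) ρ ⊆ cylinder (ball x ρ) (ball t ρ) := by
  intro X hX
  rw [mem_ball, ← snoc_projT_lastCoord X] at hX
  exact ⟨(dist_base_le_dist_snoc _ _ _ _).trans_lt hX,
    (dist_height_le_dist_snoc _ _ _ _).trans_lt hX⟩

lemma cylinder_mono {Ω Ω' : Set (EuclideanSpace ℝ (Fin n))} {I I' : Set ℝ} (hΩ : Ω ⊆ Ω')
    (hI : I ⊆ I') : cylinder Ω I ⊆ cylinder Ω' I' :=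
  fun _ hX => ⟨hΩ hX.1, hI hX.2⟩

lemma disjoint_cylinder_compl (Ω : Set (EuclideanSpace ℝ (Fin n))) (I J : Set ℝ) :
    Disjoint (cylinder Ω I) (cylinder Ωᶜ J) :=
  Set.disjoint_left.2 fun _ hX hY => hY.1 hX.1

end Coordinates

section Column

variable {n : ℕ}

def ballColumn (x : EuclideanSpace ℝ (Fin n)) (r a : ℝ) (m : ℕ) :
    Set (EuclideanSpace ℝ (Fin (n + 1))) :=
  ⋃ i ∈ Finset.range m, ball (snoc x (a - (2 * i + 1) * r)) r

lemma measurableSet_ballColumn (x : EuclideanSpace ℝ (Fin n)) (r a : ℝ) (m : ℕ) :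
    MeasurableSet (ballColumn x r a m) :=
  (Finset.range m).measurableSet_biUnion fun _ _ => measurableSet_ball

lemma volume_ballColumn (x : EuclideanSpace ℝ (Fin n)) {r : ℝ} (hr : 0 ≤ r) (a : ℝ) (m : ℕ) :
    volume (ballColumn x r a m) = m * volume (ball (0 : EuclideanSpace ℝ (Fin (n + 1))) r) := by
  have hdisj : (Finset.range m : Set ℕ).PairwiseDisjoint
      fun i : ℕ => ball (snoc x (a - (2 * i + 1) * r)) r := by
    intro i _ j _ hij
    refine ball_disjoint_ball ?_
    have hij' : (1 : ℝ) ≤ |(j : ℝ) - i| := by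
      exact_mod_cast Int.one_le_abs (sub_ne_zero.2 (by exact_mod_cast hij.symm : (j : ℤ) ≠ i))
    rw [dist_snoc_snoc_left, Real.dist_eq]
    calc r + r ≤ 2 * r * |(j : ℝ) - i| := by nlinarith
      _ = _ := by rw [← abs_of_nonneg (by positivity : 0 ≤ 2 * r), ← abs_mul]; congr 1; ring
  rw [ballColumn, measure_biUnion_finset hdisj fun _ _ => measurableSet_ball]
  simp [Measure.addHaar_ball_center]

lemma ballColumn_subset_cylinder (x : EuclideanSpace ℝ (Fin n)) {r : ℝ} (hr : 0 ≤ r) (a : ℝ)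
    (m : ℕ) : ballColumn x r a m ⊆ cylinder (ball x r) (Iic a) := by
  refine iUnion₂_subset fun i _ => (ball_snoc_subset_cylinder _ _ _).trans
    (cylinder_mono subset_rfl fun t ht => ?_)
  rw [mem_ball, Real.dist_eq, abs_lt] at ht
  rw [mem_Iic]; nlinarith [ht.2, (Nat.cast_nonneg i : (0 : ℝ) ≤ i)]

lemma ballColumn_subset_ball (x : EuclideanSpace ℝ (Fin n)) {r : ℝ} (hr : 0 ≤ r) (a : ℝ)
    (m : ℕ) : ballColumn x r a m ⊆ ball (snoc x a) (2 * m * r) := by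
  refine iUnion₂_subset fun i hi => ball_subset_ball' ?_
  rw [dist_snoc_snoc_left, Real.dist_eq, sub_sub_cancel_left, abs_neg,
    abs_of_nonneg (by positivity)]
  have : (i : ℝ) + 1 ≤ m := by exact_mod_cast Finset.mem_range.1 hi
  nlinarith

end Column

section Interaction

variable {n : ℕ} {s : ℝ}

lemma Ls_mono_ae {A A' B B' : Set (EuclideanSpace ℝ (Fin n))} (hA : A ≤ᵐ[volume] A')
    (hB : B ≤ᵐ[volume] B') : Ls n s A B ≤ Ls n s A' B' :=
  lintegral_mono' (Measure.restrict_mono_ae hA) fun _ =>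
    lintegral_mono' (Measure.restrict_mono_ae hB) le_rfl

lemma ofReal_rpow_mul_volume_mul_volume_le_Ls (hs : 0 ≤ (n : ℝ) + s)
    {A B : Set (EuclideanSpace ℝ (Fin n))} (hA : MeasurableSet A) (hB : MeasurableSet B)
    (hAB : Disjoint A B) {D : ℝ} (hD : ∀ X ∈ A, ∀ Y ∈ B, dist X Y ≤ D) :
    ENNReal.ofReal (D ^ (-((n : ℝ) + s))) * volume A * volume B ≤ Ls n s A B := by
  have hker : ∀ X ∈ A, ∀ Y ∈ B,
      ENNReal.ofReal (D ^ (-((n : ℝ) + s))) ≤ ENNReal.ofReal (dist X Y ^ (-((n : ℝ) + s))) :=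
    fun X hX Y hY => ENNReal.ofReal_le_ofReal <| Real.rpow_le_rpow_of_nonpos
      (dist_pos.2 (hAB.ne_of_mem hX hY)) (hD X hX Y hY) (neg_nonpos.2 hs)
  calc ENNReal.ofReal (D ^ (-((n : ℝ) + s))) * volume A * volume B
      = ∫⁻ _ in A, ∫⁻ _ in B, ENNReal.ofReal (D ^ (-((n : ℝ) + s))) := by
        rw [setLIntegral_const, setLIntegral_const, mul_right_comm]
    _ ≤ Ls n s A B := setLIntegral_mono' hA fun X hX => setLIntegral_mono' hB (hker X hX)

end Interaction

lemma eq_top_of_forall_le_mul_rpow {L c : ℝ≥0∞} (hc : c ≠ 0) {p : ℝ} (hp : 0 < p)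
    (h : ∀ m : ℕ, 1 ≤ m → c * ENNReal.ofReal ((m : ℝ) ^ p) ≤ L) : L = ⊤ := by
  have hlim : Tendsto (fun m : ℕ => c * ENNReal.ofReal ((m : ℝ) ^ p)) atTop (𝓝 ⊤) := by
    have := ENNReal.Tendsto.const_mul (a := c) (ENNReal.tendsto_ofReal_atTop.comp
      ((tendsto_rpow_atTop hp).comp tendsto_natCast_atTop_atTop)) (Or.inl ENNReal.top_ne_zero)
    rwa [ENNReal.mul_top hc] at this
  exact eq_top_iff.2 (le_of_tendsto hlim (eventually_atTop.2 ⟨1, h⟩))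

lemma rpow_mul_mul_pow_eq {C m : ℝ} (hC : 0 ≤ C) (hm : 0 < m) (N : ℕ) (s : ℝ) :
    (C * m) ^ (-((N : ℝ) + s)) * m * m ^ N = C ^ (-((N : ℝ) + s)) * m ^ (1 - s) := by
  rw [Real.mul_rpow hC hm.le, mul_assoc (C ^ _), ← Real.rpow_add_one hm.ne', mul_assoc,
    ← Real.rpow_natCast m N, ← Real.rpow_add hm]
  ring_nf

section Cylinders

variable {n : ℕ} {s : ℝ} {Ω : Set (EuclideanSpace ℝ (Fin n))}

lemma ball_snoc_subset_cylinder_compl_Ioi {x₀ y : EuclideanSpace ℝ (Fin n)} {R ρ : ℝ}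
    (hΩR : Ω ⊆ ball x₀ R) (hy : R + ρ ≤ dist x₀ y) (b : ℝ) :
    ball (snoc y (b + ρ)) ρ ⊆ cylinder Ωᶜ (Ioi b) := by
  refine (ball_snoc_subset_cylinder _ _ _).trans (cylinder_mono ?_ ?_)
  · exact fun z hz hzΩ => (ball_disjoint_ball hy).ne_of_mem (hΩR hzΩ) hz rfl
  · rw [Real.ball_eq_Ioo, add_sub_cancel_right]
    exact Ioo_subset_Ioi_self

lemma le_Ls_cylinder_Iic_cylinder_compl_Ioi (hs : 0 < s) {x₀ : EuclideanSpace ℝ (Fin n)}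
    {r R : ℝ} (hr : 0 < r) (hrΩ : ball x₀ r ⊆ Ω) (hΩR : Ω ⊆ ball x₀ R) (a b : ℝ) {m : ℕ}
    (hm : 1 ≤ m) {y : EuclideanSpace ℝ (Fin n)} (hy : dist x₀ y = R + m) :
    ENNReal.ofReal ((2 * r + R + |a - b| + 3) ^ (-(((n + 1 : ℕ) : ℝ) + s))) *
        volume (ball (0 : EuclideanSpace ℝ (Fin (n + 1))) r) *
        volume (ball (0 : EuclideanSpace ℝ (Fin (n + 1))) 1) * ENNReal.ofReal ((m : ℝ) ^ (1 - s)) ≤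
      Ls (n + 1) s (cylinder Ω (Iic a)) (cylinder Ωᶜ (Ioi b)) := by
  have hm' : (1 : ℝ) ≤ m := by exact_mod_cast hm
  have hR : 0 < R := pos_of_mem_ball (hΩR (hrΩ (mem_ball_self hr)))
  set C := 2 * r + R + |a - b| + 3
  set A := ballColumn x₀ r a m
  set B := ball (snoc y (b + m)) m
  have hA : A ⊆ cylinder Ω (Iic a) :=
    (ballColumn_subset_cylinder x₀ hr.le a m).trans (cylinder_mono hrΩ subset_rfl)
  have hB : B ⊆ cylinder Ωᶜ (Ioi b) := ball_snoc_subset_cylinder_compl_Ioi hΩR hy.ge b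
  have hD : ∀ X ∈ A, ∀ Y ∈ B, dist X Y ≤ C * m := by
    intro X hX Y hY
    have hXP := mem_ball.1 (ballColumn_subset_ball x₀ hr.le a m hX)
    have hPQ := dist_snoc_snoc_le x₀ y a (b + m)
    rw [hy, Real.dist_eq] at hPQ
    have hab : |a - (b + m)| ≤ |a - b| + m := by
      rw [← sub_sub]; exact (abs_sub _ _).trans_eq (by rw [Nat.abs_cast])
    have := dist_triangle4 X (snoc x₀ a) (snoc y (b + m)) Y
    rw [dist_comm (snoc y (b + m))] at this
    nlinarith [mem_ball.1 hY, abs_nonneg (a - b)]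
  have hvolB : volume B = ENNReal.ofReal ((m : ℝ) ^ (n + 1)) *
      volume (ball (0 : EuclideanSpace ℝ (Fin (n + 1))) 1) := by
    rw [Measure.addHaar_ball _ _ (by positivity), finrank_euclideanSpace_fin]
  calc _ = ENNReal.ofReal ((C * m) ^ (-(((n + 1 : ℕ) : ℝ) + s)) * m * (m : ℝ) ^ (n + 1)) *
        volume (ball (0 : EuclideanSpace ℝ (Fin (n + 1))) r) *
        volume (ball (0 : EuclideanSpace ℝ (Fin (n + 1))) 1) := by
        rw [rpow_mul_mul_pow_eq (by positivity) (by positivity), ENNReal.ofReal_mul (by positivity)]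
        ring
    _ = ENNReal.ofReal ((C * m) ^ (-(((n + 1 : ℕ) : ℝ) + s))) * volume A * volume B := by
        rw [volume_ballColumn x₀ hr.le, hvolB, ENNReal.ofReal_mul (by positivity),
          ENNReal.ofReal_mul (by positivity), ENNReal.ofReal_natCast]
        ring
    _ ≤ Ls (n + 1) s A B :=
        ofReal_rpow_mul_volume_mul_volume_le_Ls (by positivity)
          (measurableSet_ballColumn x₀ r a m) measurableSet_ball
          ((disjoint_cylinder_compl Ω _ _).mono hA hB) hD
    _ ≤ _ := Ls_mono_ae hA.eventuallyLE hB.eventuallyLE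

lemma Ls_cylinder_Iic_cylinder_compl_Ioi_eq_top (hn : 1 ≤ n) (hs : s ∈ Ioo 0 1) (hΩo : IsOpen Ω)
    (hΩb : IsBounded Ω) (hΩne : Ω.Nonempty) (a b : ℝ) :
    Ls (n + 1) s (cylinder Ω (Iic a)) (cylinder Ωᶜ (Ioi b)) = ⊤ := by
  obtain ⟨x₀, hx₀⟩ := hΩne
  obtain ⟨r, hr, hrΩ⟩ := Metric.isOpen_iff.1 hΩo x₀ hx₀
  obtain ⟨R, hR, hΩR⟩ := hΩb.subset_ball_lt 0 x₀
  set e := EuclideanSpace.single (⟨0, hn⟩ : Fin n) (1 : ℝ)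
  have hy (m : ℕ) : dist x₀ (x₀ + (R + m) • e) = R + m := by
    rw [dist_comm, dist_eq_norm, add_sub_cancel_left, norm_smul, PiLp.norm_single,
      norm_one, mul_one, Real.norm_of_nonneg (by positivity)]
  refine eq_top_of_forall_le_mul_rpow ?_ (sub_pos.2 hs.2)
    fun m hm => le_Ls_cylinder_Iic_cylinder_compl_Ioi hs.1 hr hrΩ hΩR a b hm (hy m)
  have hC : 0 < 2 * r + R + |a - b| + 3 := by positivity
  exact mul_ne_zero (mul_ne_zero (ENNReal.ofReal_pos.2 (Real.rpow_pos_of_pos hC _)).ne'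
    (measure_ball_pos _ _ hr).ne') (measure_ball_pos _ _ one_pos).ne'

end Cylinders

theorem nonlocal_part_infinite_in_cylinder_general
    (n : ℕ) (hn : 1 ≤ n) (s : ℝ) (hs : s ∈ Set.Ioo (0 : ℝ) 1)
    (Ω : Set (EuclideanSpace ℝ (Fin n))) (hΩo : IsOpen Ω) (hΩb : IsBounded Ω)
    (hΩne : Ω.Nonempty)
    (E : Set (EuclideanSpace ℝ (Fin (n + 1))))
    (k : ℕ)
    (hlow : volume ({X : EuclideanSpace ℝ (Fin (n + 1)) | lastCoord X ≤ -(k : ℝ)} \ E) = 0)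
    (hup : volume (E \ {X : EuclideanSpace ℝ (Fin (n + 1)) | lastCoord X ≤ (k : ℝ)}) = 0) :
    PsNL (n + 1) s E (cylinder Ω Set.univ) = ⊤ := by
  rw [PsNL, eq_top_iff, ← Ls_cylinder_Iic_cylinder_compl_Ioi_eq_top hn hs hΩo hΩb hΩne (-k) k]
  refine le_add_right (Ls_mono_ae ?_ ?_)
  · have hsub : cylinder Ω (Iic (-k)) ⊆ {X | lastCoord X ≤ -(k : ℝ)} ∩ cylinder Ω univ :=
      fun X hX => ⟨hX.2, hX.1, trivial⟩
    exact hsub.eventuallyLE.trans ((ae_le_set.2 hlow).inter EventuallyLE.rfl)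
  · have hsub : cylinder Ωᶜ (Ioi k) ⊆ {X | lastCoord X ≤ (k : ℝ)}ᶜ \ cylinder Ω univ :=
      fun X hX => ⟨not_le.2 (mem_Ioi.1 hX.2), fun h => hX.1 h.1⟩
    exact hsub.eventuallyLE.trans ((ae_le_set.2 hup).compl.diff EventuallyLE.rfl)

/-- second part of Theorem 1.13: if `E ⊆ ℝ^{n+1}` is trapped between the
half-spaces `{t ≤ −k}` and `{t ≤ k}` (up to null sets), then the nonlocal part of its
`s`-perimeter in the infinite cylinder `Ω × ℝ` is infinite. -/
theorem nonlocal_part_infinite_in_cylinder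
    (n : ℕ) (hn : 1 ≤ n) (s : ℝ) (hs : s ∈ Set.Ioo (0 : ℝ) 1)
    (Ω : Set (EuclideanSpace ℝ (Fin n))) (hΩo : IsOpen Ω) (hΩb : IsBounded Ω)
    (hΩne : Ω.Nonempty)
    (E : Set (EuclideanSpace ℝ (Fin (n + 1)))) (hE : MeasurableSet E)
    (k : ℕ)
    (hlow : volume ({X : EuclideanSpace ℝ (Fin (n + 1)) | lastCoord X ≤ -(k : ℝ)} \ E) = 0)
    (hup : volume (E \ {X : EuclideanSpace ℝ (Fin (n + 1)) | lastCoord X ≤ (k : ℝ)}) = 0) :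
    PsNL (n + 1) s E (cylinder Ω Set.univ) = ⊤ :=
  nonlocal_part_infinite_in_cylinder_general n hn s hs Ω hΩo hΩb hΩne E k hlow hup
end

section
/- Let s ∈ (0,1), let Ω ⊆ ℝ^n be an open set and let (Ω_k) be a sequence of open sets with Ω_k →loc Ω. Then for every measurable set E ⊆ ℝ^n one has P_s(E,Ω) ≤ liminf_{k→∞} P_s(E,Ω_k). If moreover Ω_k ⊆ Ω for every k, then P_s(E,Ω) = lim_{k→∞} P_s(E,Ω_k) (as an identity in [0,∞]). Consequently, P_s(E,Ω) = sup{ P_s(E,Ω') : Ω' open, Ω' ⊂⊂ Ω }. -/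
open MeasureTheory Set Filter Topology Metric Bornology
open scoped ENNReal NNReal symmDiff

noncomputable def Ps (n : ℕ) (s : ℝ) (E Ω : Set (EuclideanSpace ℝ (Fin n))) : ℝ≥0∞ :=
  Ls n s (E ∩ Ω) (Eᶜ ∩ Ω) + Ls n s (E ∩ Ω) (Eᶜ \ Ω) + Ls n s (E \ Ω) (Eᶜ ∩ Ω)

def SMinimal (n : ℕ) (s : ℝ) (E Ω : Set (EuclideanSpace ℝ (Fin n))) : Prop :=
  Ps n s E Ω < ⊤ ∧ ∀ F : Set (EuclideanSpace ℝ (Fin n)), MeasurableSet F →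
    volume ((F \ Ω) ∆ (E \ Ω)) = 0 → Ps n s E Ω ≤ Ps n s F Ω

def LocConv (n : ℕ) (A : ℕ → Set (EuclideanSpace ℝ (Fin n)))
    (B : Set (EuclideanSpace ℝ (Fin n))) : Prop :=
  ∀ K : Set (EuclideanSpace ℝ (Fin n)), IsBounded K →
    Tendsto (fun h => volume ((A h ∆ B) ∩ K)) atTop (𝓝 0)

/-!
`Pₛ(E,Ω)` is the mass, for `ν = |x - y|^{-(n+s)} dx dy`, of the pairs `(x, y) ∈ E × Eᶜ` with
`x ∈ Ω` or `y ∈ Ω`. The pairs counted for `Ω` but not for `Ωₖ` lie in the strip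
`(Ω \ Ωₖ) × ℝⁿ ∪ ℝⁿ × (Ω \ Ωₖ)`. Since the kernel is singular on the diagonal, the strip is only
estimated after truncating the kernel at height `N` and restricting to `B_N × B_N`: there its mass
is at most `2N |B_N| |(Ω \ Ωₖ) ∩ B_N| → 0`, and `N → ∞` is monotone convergence. This gives
lower semicontinuity; for `Ωₖ ⊆ Ω` monotonicity gives the matching upper bound, and the supremum
formula is continuity of `ν` along an increasing exhaustion of `Ω` by open sets `Ω' ⊂⊂ Ω`.
-/

theorem IsOpen.exists_monotone_isCompact_closure_subset {X : Type*} [TopologicalSpace X]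
    [T2Space X] [LocallyCompactSpace X] [SecondCountableTopology X] {U : Set X} (hU : IsOpen U) :
    ∃ V : ℕ → Set X, Monotone V ∧ ⋃ j, V j = U ∧
      ∀ j, IsOpen (V j) ∧ IsCompact (closure (V j)) ∧ closure (V j) ⊆ U := by
  have : LocallyCompactSpace U := hU.locallyCompactSpace
  let K := CompactExhaustion.choice U
  have hK : ∀ j, IsCompact (((↑) : U → X) '' K j) :=
    fun j => (K.isCompact j).image continuous_subtype_val
  have hcl : ∀ j, closure (((↑) : U → X) '' interior (K j)) ⊆ (↑) '' K j :=
    fun j => closure_minimal (image_mono interior_subset) (hK j).isClosed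
  refine ⟨fun j => (↑) '' interior (K j), fun i j hij => image_mono (interior_mono (K.subset hij)),
    ?_, fun j => ⟨hU.isOpenMap_subtype_val _ isOpen_interior,
      (hK j).of_isClosed_subset isClosed_closure (hcl j),
      (hcl j).trans (Subtype.coe_image_subset _ _)⟩⟩
  rw [← image_iUnion, iUnion_eq_univ_iff.mpr fun x => ?_, image_univ, Subtype.range_coe]
  obtain ⟨j, hj⟩ := K.exists_mem_nhds x
  exact ⟨j, mem_interior_iff_mem_nhds.mpr hj⟩

section InteractionSet

variable {X : Type*}

def interactionSet (E Ω : Set X) : Set (X × X) :=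
  (E ×ˢ Eᶜ) ∩ (Ω ×ˢ univ ∪ univ ×ˢ Ω)

theorem interactionSet_mono (E : Set X) : Monotone (interactionSet E) := fun _ _ h =>
  inter_subset_inter_right _ (union_subset_union (prod_mono_left h) (prod_mono_right h))

theorem interactionSet_iUnion {ι : Sort*} (E : Set X) (Ω : ι → Set X) :
    interactionSet E (⋃ i, Ω i) = ⋃ i, interactionSet E (Ω i) := by
  simp only [interactionSet, iUnion_prod_const, prod_iUnion, ← iUnion_union_distrib,
    inter_iUnion]

theorem interactionSet_subset_union_diff (E Ω Ω' : Set X) :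
    interactionSet E Ω ⊆ interactionSet E Ω' ∪ ((Ω \ Ω') ×ˢ univ ∪ univ ×ˢ (Ω \ Ω')) := by
  rintro ⟨x, y⟩ ⟨hE, hx | hy⟩
  · by_cases hx' : x ∈ Ω'
    · exact Or.inl ⟨hE, Or.inl ⟨hx', trivial⟩⟩
    · exact Or.inr (Or.inl ⟨⟨hx.1, hx'⟩, trivial⟩)
  · by_cases hy' : y ∈ Ω'
    · exact Or.inl ⟨hE, Or.inr ⟨trivial, hy'⟩⟩
    · exact Or.inr (Or.inr ⟨trivial, ⟨hy.2, hy'⟩⟩)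

end InteractionSet

section TruncatedKernel

variable {X : Type*} [PseudoMetricSpace X] (K : X × X → ℝ≥0∞) (x₀ : X)

noncomputable def truncKernel (N : ℕ) : X × X → ℝ≥0∞ :=
  (ball x₀ N ×ˢ ball x₀ N).indicator fun p => min (K p) N

variable {K}

theorem monotone_truncKernel : Monotone (truncKernel K x₀) := by
  intro M N hMN p
  have hball : ball x₀ M ×ˢ ball x₀ M ⊆ ball x₀ N ×ˢ ball x₀ N :=
    prod_mono (ball_subset_ball (by exact_mod_cast hMN)) (ball_subset_ball (by exact_mod_cast hMN))
  refine (indicator_le_indicator_of_subset hball (fun _ => zero_le) p).trans ?_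
  exact indicator_le_indicator (min_le_min_left _ (by exact_mod_cast hMN))

theorem iSup_truncKernel (hK : ∀ p, K p ≠ ∞) (p : X × X) : ⨆ N, truncKernel K x₀ N p = K p := by
  refine le_antisymm (iSup_le fun N => ?_) ?_
  · exact (indicator_le_self _ _ p).trans (min_le_left _ _)
  obtain ⟨N, hKN, hpN⟩ : ∃ N : ℕ, K p ≤ N ∧ p ∈ ball x₀ N ×ˢ ball x₀ N := by
    obtain ⟨N₁, h₁⟩ := ENNReal.exists_nat_gt (hK p)
    obtain ⟨N₂, h₂⟩ := exists_nat_gt (max (dist p.1 x₀) (dist p.2 x₀))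
    refine ⟨max N₁ N₂, h₁.le.trans (by exact_mod_cast le_max_left _ _), ?_⟩
    have h₂' : max (dist p.1 x₀) (dist p.2 x₀) < (max N₁ N₂ : ℕ) :=
      h₂.trans_le (by exact_mod_cast le_max_right _ _)
    exact ⟨(le_max_left _ _).trans_lt h₂', (le_max_right _ _).trans_lt h₂'⟩
  refine le_iSup_of_le N ?_
  rw [truncKernel, indicator_of_mem hpN, min_eq_left hKN]

variable [MeasurableSpace X] [OpensMeasurableSpace X]

theorem measurable_truncKernel (hK : Measurable K) (N : ℕ) : Measurable (truncKernel K x₀ N) :=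
  (hK.min measurable_const).indicator (measurableSet_ball.prod measurableSet_ball)

variable (μ : Measure X) [SFinite μ]

theorem withDensity_apply_eq_iSup_truncKernel (hKm : Measurable K) (hK : ∀ p, K p ≠ ∞)
    (A : Set (X × X)) :
    (μ.prod μ).withDensity K A = ⨆ N, ∫⁻ p in A, truncKernel K x₀ N p ∂μ.prod μ := by
  rw [withDensity_apply',
    ← lintegral_iSup (measurable_truncKernel x₀ hKm) (monotone_truncKernel x₀)]
  simp only [iSup_truncKernel x₀ hK]

theorem setLIntegral_truncKernel_strip_le (N : ℕ) (W : Set X) :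
    ∫⁻ p in W ×ˢ univ ∪ univ ×ˢ W, truncKernel K x₀ N p ∂μ.prod μ
      ≤ 2 * N * μ (ball x₀ N) * μ (W ∩ ball x₀ N) := by
  set B := ball x₀ (N : ℝ)
  have hB : MeasurableSet (B ×ˢ B) := measurableSet_ball.prod measurableSet_ball
  have hstrip : B ×ˢ B ∩ (W ×ˢ univ ∪ univ ×ˢ W) ⊆ (W ∩ B) ×ˢ B ∪ B ×ˢ (W ∩ B) := by
    rintro ⟨x, y⟩ ⟨⟨hx, hy⟩, ⟨hxW, -⟩ | ⟨-, hyW⟩⟩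
    · exact Or.inl ⟨⟨hxW, hx⟩, hy⟩
    · exact Or.inr ⟨hx, ⟨hyW, hy⟩⟩
  calc ∫⁻ p in W ×ˢ univ ∪ univ ×ˢ W, truncKernel K x₀ N p ∂μ.prod μ
      ≤ ∫⁻ p in W ×ˢ univ ∪ univ ×ˢ W, (B ×ˢ B).indicator (fun _ => (N : ℝ≥0∞)) p ∂μ.prod μ :=
        lintegral_mono fun p => indicator_le_indicator (min_le_right _ _)
    _ = N * (μ.prod μ) (B ×ˢ B ∩ (W ×ˢ univ ∪ univ ×ˢ W)) := by
        rw [lintegral_indicator_const hB, Measure.restrict_apply hB]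
    _ ≤ N * ((μ.prod μ) ((W ∩ B) ×ˢ B) + (μ.prod μ) (B ×ˢ (W ∩ B))) :=
        mul_le_mul_right ((measure_mono hstrip).trans (measure_union_le _ _)) _
    _ = 2 * N * μ B * μ (W ∩ B) := by
        rw [Measure.prod_prod, Measure.prod_prod]; ring

theorem withDensity_le_liminf_of_subset_union_strip [ProperSpace X] [IsFiniteMeasureOnCompacts μ]
    (hKm : Measurable K) (hK : ∀ p, K p ≠ ∞) {A : Set (X × X)} {A' : ℕ → Set (X × X)}
    {W : ℕ → Set X} (hA : ∀ k, A ⊆ A' k ∪ (W k ×ˢ univ ∪ univ ×ˢ W k))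
    (hW : ∀ r : ℝ, Tendsto (fun k => μ (W k ∩ ball x₀ r)) atTop (𝓝 0)) :
    (μ.prod μ).withDensity K A ≤ liminf (fun k => (μ.prod μ).withDensity K (A' k)) atTop := by
  rw [withDensity_apply_eq_iSup_truncKernel x₀ μ hKm hK]
  refine iSup_le fun N => ?_
  set err := fun k => 2 * N * μ (ball x₀ N) * μ (W k ∩ ball x₀ N)
  have herr : Tendsto err atTop (𝓝 0) := by
    simpa using ENNReal.Tendsto.const_mul (hW N)
      (Or.inr (by finiteness : 2 * (N : ℝ≥0∞) * μ (ball x₀ N) ≠ ∞))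
  have hbound : ∀ k, ∫⁻ p in A, truncKernel K x₀ N p ∂μ.prod μ
      ≤ (μ.prod μ).withDensity K (A' k) + err k := fun k =>
    calc ∫⁻ p in A, truncKernel K x₀ N p ∂μ.prod μ
        ≤ ∫⁻ p in A' k ∪ (W k ×ˢ univ ∪ univ ×ˢ W k), truncKernel K x₀ N p ∂μ.prod μ :=
          lintegral_mono_set (hA k)
      _ ≤ ∫⁻ p in A' k, truncKernel K x₀ N p ∂μ.prod μ
            + ∫⁻ p in W k ×ˢ univ ∪ univ ×ˢ W k, truncKernel K x₀ N p ∂μ.prod μ :=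
          lintegral_union_le _ _ _
      _ ≤ (μ.prod μ).withDensity K (A' k) + err k := by
          gcongr
          · rw [withDensity_apply']
            exact lintegral_mono fun p => (indicator_le_self _ _ p).trans (min_le_left _ _)
          · exact setLIntegral_truncKernel_strip_le x₀ μ N (W k)
  rw [← ENNReal.liminf_add_of_right_tendsto_zero herr]
  exact le_liminf_of_le (by isBoundedDefault) (Eventually.of_forall hbound)

end TruncatedKernel

section FractionalPerimeter

variable {n : ℕ} {s : ℝ}

noncomputable def fracKernel (n : ℕ) (s : ℝ)
    (p : EuclideanSpace ℝ (Fin n) × EuclideanSpace ℝ (Fin n)) : ℝ≥0∞ :=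
  ENNReal.ofReal (dist p.1 p.2 ^ (-((n : ℝ) + s)))

theorem measurable_fracKernel : Measurable (fracKernel n s) := by
  unfold fracKernel; fun_prop

noncomputable def fracMeasure (n : ℕ) (s : ℝ) :
    Measure (EuclideanSpace ℝ (Fin n) × EuclideanSpace ℝ (Fin n)) :=
  (volume.prod volume).withDensity (fracKernel n s)

theorem Ls_eq_fracMeasure_prod (A B : Set (EuclideanSpace ℝ (Fin n))) :
    Ls n s A B = fracMeasure n s (A ×ˢ B) := by
  rw [fracMeasure, withDensity_apply', ← Measure.prod_restrict,
    lintegral_prod _ measurable_fracKernel.aemeasurable]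
  rfl

theorem Ps_eq_fracMeasure_interactionSet {E Ω : Set (EuclideanSpace ℝ (Fin n))}
    (hE : MeasurableSet E) (hΩ : MeasurableSet Ω) :
    Ps n s E Ω = fracMeasure n s (interactionSet E Ω) := by
  have hsplit : (E ∩ Ω) ×ˢ (Eᶜ ∩ Ω) ∪ (E ∩ Ω) ×ˢ (Eᶜ \ Ω) = (E ∩ Ω) ×ˢ Eᶜ := by
    rw [← prod_union, inter_union_sdiff]
  have hunion : (E ∩ Ω) ×ˢ Eᶜ ∪ (E \ Ω) ×ˢ (Eᶜ ∩ Ω) = interactionSet E Ω := by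
    ext ⟨x, y⟩
    simp only [interactionSet, mem_union, mem_prod, mem_inter_iff, Set.mem_sdiff, mem_univ,
      and_true, true_and]
    tauto
  rw [Ps, Ls_eq_fracMeasure_prod, Ls_eq_fracMeasure_prod, Ls_eq_fracMeasure_prod,
    ← measure_union (disjoint_prod.mpr (Or.inr disjoint_sdiff_inter.symm))
      ((hE.inter hΩ).prod (hE.compl.diff hΩ)),
    hsplit, ← measure_union (disjoint_prod.mpr (Or.inl disjoint_sdiff_inter.symm))
      ((hE.diff hΩ).prod (hE.compl.inter hΩ)),
    hunion]

theorem Ps_mono {E Ω₁ Ω₂ : Set (EuclideanSpace ℝ (Fin n))} (hE : MeasurableSet E)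
    (hΩ₁ : MeasurableSet Ω₁) (hΩ₂ : MeasurableSet Ω₂) (h : Ω₁ ⊆ Ω₂) :
    Ps n s E Ω₁ ≤ Ps n s E Ω₂ := by
  rw [Ps_eq_fracMeasure_interactionSet hE hΩ₁, Ps_eq_fracMeasure_interactionSet hE hΩ₂]
  exact measure_mono (interactionSet_mono E h)

theorem Ps_iUnion {E : Set (EuclideanSpace ℝ (Fin n))} (hE : MeasurableSet E)
    {V : ℕ → Set (EuclideanSpace ℝ (Fin n))} (hV : ∀ j, MeasurableSet (V j)) (hmono : Monotone V) :
    Ps n s E (⋃ j, V j) = ⨆ j, Ps n s E (V j) := by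
  simp only [Ps_eq_fracMeasure_interactionSet hE (MeasurableSet.iUnion hV),
    Ps_eq_fracMeasure_interactionSet hE (hV _), interactionSet_iUnion]
  exact ((interactionSet_mono E).comp hmono).measure_iUnion

theorem Ps_le_liminf_of_locConv {E Ω : Set (EuclideanSpace ℝ (Fin n))}
    {Ωk : ℕ → Set (EuclideanSpace ℝ (Fin n))} (hE : MeasurableSet E) (hΩ : MeasurableSet Ω)
    (hΩk : ∀ k, MeasurableSet (Ωk k)) (hconv : LocConv n Ωk Ω) :
    Ps n s E Ω ≤ liminf (fun k => Ps n s E (Ωk k)) atTop := by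
  simp only [Ps_eq_fracMeasure_interactionSet hE hΩ, Ps_eq_fracMeasure_interactionSet hE (hΩk _)]
  refine withDensity_le_liminf_of_subset_union_strip 0 volume measurable_fracKernel
    (fun _ => ENNReal.ofReal_ne_top) (fun k => interactionSet_subset_union_diff E Ω (Ωk k))
    fun r => ?_
  refine tendsto_of_tendsto_of_tendsto_of_le_of_le tendsto_const_nhds (hconv _ isBounded_ball)
    (fun _ => zero_le) fun k => measure_mono (inter_subset_inter_left _ le_sup_right)

end FractionalPerimeter

theorem fracPer_continuity_in_domain_general
    (n : ℕ) (s : ℝ)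
    (Ω : Set (EuclideanSpace ℝ (Fin n))) (hΩ : IsOpen Ω)
    (Ωk : ℕ → Set (EuclideanSpace ℝ (Fin n))) (hΩk : ∀ k, IsOpen (Ωk k))
    (hconv : LocConv n Ωk Ω)
    (E : Set (EuclideanSpace ℝ (Fin n))) (hE : MeasurableSet E) :
    Ps n s E Ω ≤ Filter.liminf (fun k => Ps n s E (Ωk k)) atTop
    ∧ ((∀ k, Ωk k ⊆ Ω) →
        Tendsto (fun k => Ps n s E (Ωk k)) atTop (𝓝 (Ps n s E Ω)))
    ∧ Ps n s E Ω = ⨆ (Ω' : Set (EuclideanSpace ℝ (Fin n)))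
        (_ : IsOpen Ω') (_ : IsCompact (closure Ω')) (_ : closure Ω' ⊆ Ω),
          Ps n s E Ω' := by
  have hlim := Ps_le_liminf_of_locConv (s := s) hE hΩ.measurableSet
    (fun k => (hΩk k).measurableSet) hconv
  refine ⟨hlim, fun hsub => ?_, le_antisymm ?_ ?_⟩
  · refine tendsto_of_le_liminf_of_limsup_le hlim (limsup_le_of_le (by isBoundedDefault) ?_)
    exact Eventually.of_forall fun k =>
      Ps_mono hE (hΩk k).measurableSet hΩ.measurableSet (hsub k)
  · obtain ⟨V, hVmono, hVΩ, hV⟩ := hΩ.exists_monotone_isCompact_closure_subset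
    calc Ps n s E Ω = ⨆ j, Ps n s E (V j) := by
          rw [← Ps_iUnion hE (fun j => (hV j).1.measurableSet) hVmono, hVΩ]
      _ ≤ _ := iSup_le fun j => le_iSup₂_of_le (V j) (hV j).1 <|
          le_iSup₂_of_le (f := fun _ _ => Ps n s E (V j)) (hV j).2.1 (hV j).2.2 le_rfl
  · exact iSup₂_le fun Ω' hΩ' => iSup₂_le fun _ hΩ'Ω =>
      Ps_mono hE hΩ'.measurableSet hΩ.measurableSet (subset_closure.trans hΩ'Ω)

/-- Proposition 2.8 and Remark 2.9: continuity of the `s`-perimeter along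
approximations of the domain from within, and the representation of `Pₛ(E,Ω)` as the supremum
over compactly contained open subsets. -/
theorem fracPer_continuity_in_domain
    (n : ℕ) (hn : 1 ≤ n) (s : ℝ) (hs : s ∈ Set.Ioo (0 : ℝ) 1)
    (Ω : Set (EuclideanSpace ℝ (Fin n))) (hΩ : IsOpen Ω)
    (Ωk : ℕ → Set (EuclideanSpace ℝ (Fin n))) (hΩk : ∀ k, IsOpen (Ωk k))
    (hconv : LocConv n Ωk Ω)
    (E : Set (EuclideanSpace ℝ (Fin n))) (hE : MeasurableSet E) :
    Ps n s E Ω ≤ Filter.liminf (fun k => Ps n s E (Ωk k)) atTop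
    ∧ ((∀ k, Ωk k ⊆ Ω) →
        Tendsto (fun k => Ps n s E (Ωk k)) atTop (𝓝 (Ps n s E Ω)))
    ∧ Ps n s E Ω = ⨆ (Ω' : Set (EuclideanSpace ℝ (Fin n)))
        (_ : IsOpen Ω') (_ : IsCompact (closure Ω')) (_ : closure Ω' ⊆ Ω),
          Ps n s E Ω' :=
  fracPer_continuity_in_domain_general n s Ω hΩ Ωk hΩk hconv E hE
end
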